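/- Let α > −1 and let L_n^{(α)} denote the Laguerre polynomial of degree n normalized with leading coefficient (−1)ⁿ/n!, i.e. L_n^{(α)}(x) = Σ_{k=0}^{n} (−1)^k C(n+α, n−k) x^k / k!. Then for every fixed x ∈ ℝ with x ≥ 0, lim_{n→∞} n^{−α} L_n^{(α)}(x/n) = Σ_{j=0}^{∞} (−1)^j x^j/(j! Γ(j+α+1)). -/

import Mathlib

/-!
With `r n = Γ(n + α + 1) / (n! n^α)`, the identity `n! = (n - k)! · n(n-1)⋯(n-k+1)` rewrites
`n^(-α) L_n(x/n)` as `∑ₖ bₖ · r n · n(n-1)⋯(n-k+1) / n^k`, where `bₖ` is the `k`-th term of the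
limit series. Euler's limit formula for `Γ` gives `r n → 1`, and each falling-factorial ratio lies
in `[0, 1]` and tends to `1`. Once `r n < 2` the summands are dominated by `2 |bₖ|`, which is
summable because `Γ ≥ 1` on `[2, ∞)`, so Tannery's theorem passes to the limit termwise.
-/

open Filter Finset

open Real Nat Asymptotics Topology

lemma Real.Gamma_add_natCast_eq_mul_prod {s : ℝ} (hs : 0 < s) (n : ℕ) :
    Gamma (s + n) = Gamma s * ∏ j ∈ range n, (s + j) := by
  induction n with
  | zero => simp
  | succ n ih =>
    rw [Nat.cast_succ, ← add_assoc, Gamma_add_one (by positivity), ih, prod_range_succ]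
    ring

lemma tendsto_Gamma_natCast_add_add_one_div_factorial_mul_rpow {α : ℝ} (hα : -1 < α) :
    Tendsto (fun n : ℕ => Gamma (n + α + 1) / (n ! * (n : ℝ) ^ α)) atTop (𝓝 1) := by
  set s := α + 1 with hs_def
  have hs : 0 < s := by linarith
  have hΓ : Gamma s ≠ 0 := (Gamma_pos_of_pos hs).ne'
  have hseq : Tendsto (fun n => Gamma s / GammaSeq s n) atTop (𝓝 1) := by
    have h := tendsto_const_nhds (x := Gamma s) |>.div (GammaSeq_tendsto_Gamma s) hΓ
    rwa [div_self hΓ] at h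
  have hfrac : Tendsto (fun n : ℕ => (n : ℝ) / (n + s)) atTop (𝓝 1) :=
    tendsto_natCast_div_add_atTop s
  have hprod := hfrac.mul hseq
  rw [mul_one] at hprod
  refine hprod.congr' ?_
  filter_upwards [eventually_ne_atTop 0] with n hn
  have hn' : (0 : ℝ) < n := by positivity
  have hP : 0 < ∏ j ∈ range n, (s + j) := prod_pos fun j _ => by positivity
  have hsn : 0 < s + n := by positivity
  have hpow : (n : ℝ) ^ s = n ^ α * n := by rw [hs_def, rpow_add hn', rpow_one]
  rw [GammaSeq, prod_range_succ, hpow, show (n : ℝ) + α + 1 = s + n by ring,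
    Gamma_add_natCast_eq_mul_prod hs]
  field_simp
  ring

lemma Nat.tendsto_descFactorial_div_pow (k : ℕ) :
    Tendsto (fun n : ℕ => (n.descFactorial k : ℝ) / n ^ k) atTop (𝓝 1) :=
  (isEquivalent_iff_tendsto_one ((eventually_ne_atTop 0).mono fun n hn => by positivity)).1
    (isEquivalent_descFactorial k)

lemma Nat.descFactorial_div_pow_le_one (n k : ℕ) : (n.descFactorial k : ℝ) / n ^ k ≤ 1 :=
  div_le_one_of_le₀ (mod_cast n.descFactorial_le_pow k) (by positivity)

-- The `k`-th term of the series of `x^(-α/2) J_α(2√x)`.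
noncomputable def besselTerm (α x : ℝ) (k : ℕ) : ℝ :=
  (-1) ^ k * x ^ k / (k ! * Gamma (k + α + 1))

lemma abs_besselTerm_le {α : ℝ} (hα : -1 < α) (x : ℝ) {k : ℕ} (hk : 2 ≤ k) :
    |besselTerm α x k| ≤ |x| ^ k / k ! := by
  have hk' : (2 : ℝ) ≤ k := mod_cast hk
  have hΓ : Gamma 2 ≤ Gamma (k + α + 1) :=
    Gamma_strictMonoOn_Ici.monotoneOn (Set.mem_Ici.2 le_rfl) (Set.mem_Ici.2 (by linarith))
      (by linarith)
  rw [Gamma_two] at hΓ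
  rw [besselTerm, abs_div, abs_mul, abs_mul, abs_pow, abs_pow, abs_neg, abs_one, one_pow, one_mul,
    Nat.abs_cast, abs_of_pos (by linarith : 0 < Gamma (k + α + 1))]
  gcongr
  exact le_mul_of_one_le_right (by positivity) hΓ

lemma summable_abs_besselTerm {α : ℝ} (hα : -1 < α) (x : ℝ) :
    Summable fun k => |besselTerm α x k| :=
  .of_norm_bounded_eventually_nat (Real.summable_pow_div_factorial |x|) <|
    (eventually_ge_atTop 2).mono fun k hk => by
      simpa only [norm_abs_eq_norm, Real.norm_eq_abs] using abs_besselTerm_le hα x hk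

noncomputable def laguerre (α : ℝ) (n : ℕ) (x : ℝ) : ℝ :=
  ∑ k ∈ range (n + 1),
    (-1 : ℝ) ^ k * (Gamma ((n : ℝ) + α + 1) / (Gamma ((k : ℝ) + α + 1) * (n - k)!)) * x ^ k / k !

lemma rpow_neg_mul_laguerre_div_eq_tsum (α x : ℝ) {n : ℕ} (hn : n ≠ 0) :
    (n : ℝ) ^ (-α) * laguerre α n (x / n) = ∑' k, besselTerm α x k *
      (Gamma (n + α + 1) / (n ! * (n : ℝ) ^ α) * ((n.descFactorial k : ℝ) / n ^ k)) := by
  rw [tsum_eq_sum (s := range (n + 1)), laguerre, mul_sum]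
  · refine sum_congr rfl fun k hk => ?_
    have hkn : k ≤ n := Nat.lt_succ_iff.1 (mem_range.1 hk)
    have hn' : (0 : ℝ) < n := by positivity
    have hd : (n.descFactorial k : ℝ) ≠ 0 :=
      mod_cast Nat.descFactorial_eq_zero_iff_lt.not.2 (by omega)
    rw [← Nat.factorial_mul_descFactorial hkn, besselTerm, rpow_neg hn'.le, div_pow]
    push_cast
    field_simp
  · intro k hk
    rw [Nat.descFactorial_eq_zero_iff_lt.2 (by simpa using hk)]
    simp

theorem stmt_18 (α : ℝ) (hα : -1 < α) :
    let L : ℕ → ℝ → ℝ := fun n x =>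
      ∑ k ∈ Finset.range (n + 1),
        (-1 : ℝ) ^ k * (Real.Gamma ((n : ℝ) + α + 1) /
          (Real.Gamma ((k : ℝ) + α + 1) * (Nat.factorial (n - k)))) * x ^ k / (Nat.factorial k)
    ∀ x : ℝ, 0 ≤ x →
      Tendsto (fun n : ℕ => (n : ℝ) ^ (-α) * L n (x / (n : ℝ))) atTop
        (nhds (∑' j : ℕ, (-1 : ℝ) ^ j * x ^ j /
          ((Nat.factorial j) * Real.Gamma ((j : ℝ) + α + 1)))) := by
  intro L x _
  have hr := tendsto_Gamma_natCast_add_add_one_div_factorial_mul_rpow hα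
  have hdom : Tendsto (fun n : ℕ => ∑' k, besselTerm α x k *
      (Gamma (n + α + 1) / (n ! * (n : ℝ) ^ α) * ((n.descFactorial k : ℝ) / n ^ k)))
      atTop (𝓝 (∑' k, besselTerm α x k)) := by
    refine tendsto_tsum_of_dominated_convergence ((summable_abs_besselTerm hα x).mul_right 2)
      (fun k => ?_) ?_
    · simpa using tendsto_const_nhds.mul (hr.mul (Nat.tendsto_descFactorial_div_pow k))
    · filter_upwards [hr.eventually (Ioo_mem_nhds zero_lt_one one_lt_two)] with n hrn k
      have hp : 0 ≤ (n.descFactorial k : ℝ) / n ^ k := by positivity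
      rw [norm_mul, norm_mul, Real.norm_eq_abs, Real.norm_of_nonneg hrn.1.le,
        Real.norm_of_nonneg hp]
      gcongr
      calc _ ≤ 2 * 1 := mul_le_mul hrn.2.le (Nat.descFactorial_div_pow_le_one n k) hp zero_le_two
        _ = 2 := mul_one 2
  refine hdom.congr' ?_
  filter_upwards [eventually_ne_atTop 0] with n hn
  exact (rpow_neg_mul_laguerre_div_eq_tsum α x hn).symm
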